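/- Let m > 0, let n ≥ 1 be an integer, and let A_1, …, A_n be positive real numbers. Define β_1 = m/(2A_1) and β_i = (m/2)( A_{i−1} + 1/A_i ) for 2 ≤ i ≤ n, and let H be the symmetric tridiagonal n×n matrix with H(i,i) = 2β_i, H(i,i+1) = H(i+1,i) = −m, and H(i,j) = 0 for |i−j| ≥ 2. Then H is positive definite, and for all 1 ≤ j ≤ i ≤ n the entries of its inverse G = H^{−1} are given by G(j,i) = G(i,j) = ( ∏_{k=j}^{i−1} A_k ) · (1/m) · ( A_i + Σ_{k=i}^{n−1} ( ∏_{r=i}^{k} A_r² ) · A_{k+1} ), with the conventions that the empty product equals 1 and the empty sum equals 0. -/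

import Mathlib

open Matrix

/-- The discrete Schrödinger operator `H_β` on the path graph `{1,…,n}` with constant
edge weights `m` (indices 0-based, potential `β_1, …, β_n`). -/
noncomputable def Hpath (n : ℕ) (m : ℝ) (β : ℕ → ℝ) : Matrix (Fin n) (Fin n) ℝ :=
  Matrix.of fun i j => if (i : ℕ) = (j : ℕ) then 2 * β ((i : ℕ) + 1)
    else if (i : ℕ) + 1 = (j : ℕ) ∨ (j : ℕ) + 1 = (i : ℕ) then -m else 0

/-- The potential built from the variables `A_i`: `β_1 = m/(2A_1)`,
`β_i = (m/2)(A_{i-1} + 1/A_i)` for `i ≥ 2`. -/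
noncomputable def betaOfA (m : ℝ) (A : ℕ → ℝ) (i : ℕ) : ℝ :=
  if i = 1 then m / (2 * A 1) else (m / 2) * (A (i - 1) + 1 / A i)

namespace HpathAux

noncomputable def fA (n : ℕ) (A : ℕ → ℝ) (i : ℕ) : ℝ :=
  A (i+1) + ∑ k ∈ Finset.Icc (i+1) (n-1), (∏ r ∈ Finset.Icc (i+1) k, A r ^ 2) * A (k+1)

lemma fA_last (n : ℕ) (hn : 1 ≤ n) (A : ℕ → ℝ) : fA n A (n-1) = A n := by
  unfold fA
  rw [Nat.sub_add_cancel hn, Finset.Icc_eq_empty (by omega), Finset.sum_empty, add_zero]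

lemma fA_rec (n : ℕ) (A : ℕ → ℝ) (i : ℕ) (h : i + 1 < n) :
    fA n A i = A (i+1) * (1 + A (i+1) * fA n A (i+1)) := by
  unfold fA
  have h1 : i + 1 ≤ n - 1 := by omega
  rw [← Finset.Ioc_insert_left h1, ← Finset.Icc_add_one_left_eq_Ioc,
    Finset.sum_insert (by simp)]
  have hsum : ∀ k ∈ Finset.Icc (i+1+1) (n-1),
      (∏ r ∈ Finset.Icc (i+1) k, A r ^ 2) * A (k+1)
        = A (i+1)^2 * ((∏ r ∈ Finset.Icc (i+1+1) k, A r ^ 2) * A (k+1)) := by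
    intro k hk
    rw [Finset.mem_Icc] at hk
    rw [← Finset.Ioc_insert_left (by omega : i+1 ≤ k), ← Finset.Icc_add_one_left_eq_Ioc,
      Finset.prod_insert (by simp)]
    ring
  rw [Finset.sum_congr rfl hsum, ← Finset.mul_sum, Finset.Icc_self, Finset.prod_singleton]
  ring

noncomputable def gA (m : ℝ) (n : ℕ) (A : ℕ → ℝ) (j i : ℕ) : ℝ :=
  (∏ k ∈ Finset.Icc (j+1) i, A k) * (1/m) * fA n A i

lemma gA_step (m : ℝ) (n : ℕ) (A : ℕ → ℝ) {j i : ℕ} (h : j < i) :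
    gA m n A j i = A (j+1) * gA m n A (j+1) i := by
  unfold gA
  rw [← Finset.Ioc_insert_left (by omega : j+1 ≤ i), ← Finset.Icc_add_one_left_eq_Ioc,
    Finset.prod_insert (by simp)]
  ring

lemma gA_self (m : ℝ) (n : ℕ) (A : ℕ → ℝ) (i : ℕ) :
    gA m n A i i = (1/m) * fA n A i := by
  unfold gA
  rw [Finset.Icc_eq_empty (by omega), Finset.prod_empty, one_mul]

lemma gA_succ (m : ℝ) (n : ℕ) (A : ℕ → ℝ) (i : ℕ) :
    gA m n A i (i+1) = A (i+1) * ((1/m) * fA n A (i+1)) := by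
  unfold gA
  rw [Finset.Icc_self, Finset.prod_singleton]
  ring

lemma gA_top (m : ℝ) (n : ℕ) (A : ℕ → ℝ) {j i : ℕ} (h : j ≤ i) :
    gA m n A j (i+1) = (∏ k ∈ Finset.Icc (j+1) i, A k) * A (i+1) * (1/m) * fA n A (i+1) := by
  unfold gA
  rw [Finset.prod_Icc_succ_top (by omega : j+1 ≤ i+1)]

lemma key (m : ℝ) (hm : 0 < m) (n : ℕ) (hn : 1 ≤ n) (A : ℕ → ℝ)
    (hA : ∀ i : ℕ, 1 ≤ i → i ≤ n → 0 < A i) (a b : ℕ) (ha : a < n) (hb : b < n) :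
    (if 1 ≤ a then -m * gA m n A (min (a-1) b) (max (a-1) b) else 0)
      + 2 * betaOfA m A (a+1) * gA m n A (min a b) (max a b)
      + (if a+1 < n then -m * gA m n A (min (a+1) b) (max (a+1) b) else 0)
      = if a = b then 1 else 0 := by
  have hmne : m ≠ 0 := ne_of_gt hm
  rcases lt_trichotomy a b with hab | rfl | hab
  · -- a < b
    have h3 : a + 1 < n := by omega
    rw [if_pos h3, if_neg (by omega : ¬ a = b),
      min_eq_left (show a - 1 ≤ b by omega), max_eq_right (show a - 1 ≤ b by omega),
      min_eq_left (show a ≤ b by omega), max_eq_right (show a ≤ b by omega),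
      min_eq_left (show a + 1 ≤ b by omega), max_eq_right (show a + 1 ≤ b by omega)]
    rcases Nat.eq_zero_or_pos a with rfl | hpos
    · rw [if_neg (by omega)]
      have hA1 : A 1 ≠ 0 := ne_of_gt (hA 1 le_rfl hn)
      rw [gA_step m n A hab, show betaOfA m A (0+1) = m/(2*A 1) by simp [betaOfA]]
      field_simp
      ring
    · obtain ⟨c, rfl⟩ : ∃ c, a = c + 1 := ⟨a - 1, by omega⟩
      rw [if_pos (by omega), Nat.add_sub_cancel]
      have hAne : A (c+2) ≠ 0 := ne_of_gt (hA (c+2) (by omega) (by omega))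
      rw [gA_step m n A (show c < b by omega), gA_step m n A (show c + 1 < b by omega)]
      have hβ : betaOfA m A (c+1+1) = (m/2) * (A (c+1) + 1 / A (c+2)) := by
        simp only [betaOfA, if_neg (by omega : ¬ c+1+1 = 1)]
        norm_num
      rw [hβ]
      field_simp
      ring
  · -- a = b : diagonal
    rw [if_pos rfl,
      min_eq_left (show a - 1 ≤ a by omega), max_eq_right (show a - 1 ≤ a by omega),
      min_self, max_self,
      min_eq_right (show a ≤ a + 1 by omega), max_eq_left (show a ≤ a + 1 by omega)]
    rcases Nat.eq_zero_or_pos a with rfl | hpos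
    · rw [if_neg (by omega), gA_self, show betaOfA m A (0+1) = m/(2*A 1) by simp [betaOfA],
        zero_add]
      have hA1 : A 1 ≠ 0 := ne_of_gt (hA 1 le_rfl hn)
      have hg01 : gA m n A 0 1 = A 1 * ((1/m) * fA n A 1) := by
        simpa using gA_succ m n A 0
      by_cases h2 : 0 + 1 < n
      · rw [if_pos h2, hg01]
        have hf0 : fA n A 0 = A 1 * (1 + A 1 * fA n A 1) := fA_rec n A 0 (by omega)
        rw [hf0]
        field_simp
        ring
      · rw [if_neg h2]
        have hn1 : n = 1 := by omega
        have hf0 : fA n A 0 = A 1 := by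
          have h := fA_last n hn A
          rw [hn1] at h ⊢
          simpa using h
        rw [hf0]
        field_simp
        ring
    · obtain ⟨c, rfl⟩ : ∃ c, a = c + 1 := ⟨a - 1, by omega⟩
      rw [if_pos (by omega), Nat.add_sub_cancel, gA_succ, gA_self]
      have hA1 : A (c+1) ≠ 0 := ne_of_gt (hA (c+1) (by omega) (by omega))
      have hA2 : A (c+2) ≠ 0 := ne_of_gt (hA (c+2) (by omega) (by omega))
      have hβ : betaOfA m A (c+1+1) = (m/2) * (A (c+1) + 1 / A (c+2)) := by
        simp only [betaOfA, if_neg (by omega : ¬ c+1+1 = 1)]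
        norm_num
      rw [hβ]
      by_cases h2 : c + 1 + 1 < n
      · rw [if_pos h2, gA_succ]
        have hf : fA n A (c+1) = A (c+2) * (1 + A (c+2) * fA n A (c+2)) :=
          fA_rec n A (c+1) (by omega)
        rw [hf]
        field_simp
        ring
      · rw [if_neg h2]
        have hcn : c + 1 = n - 1 := by omega
        have hf : fA n A (c+1) = A (c+2) := by
          rw [hcn, fA_last n hn A, show n = c + 2 by omega]
        rw [hf]
        field_simp
        ring
  · -- b < a
    obtain ⟨c, rfl⟩ : ∃ c, a = c + 1 := ⟨a - 1, by omega⟩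
    rw [if_pos (by omega), if_neg (by omega : ¬ c + 1 = b), Nat.add_sub_cancel,
      min_eq_right (show b ≤ c by omega), max_eq_left (show b ≤ c by omega),
      min_eq_right (show b ≤ c + 1 by omega), max_eq_left (show b ≤ c + 1 by omega),
      min_eq_right (show b ≤ c + 1 + 1 by omega), max_eq_left (show b ≤ c + 1 + 1 by omega)]
    have hβ : betaOfA m A (c+1+1) = (m/2) * (A (c+1) + 1 / A (c+2)) := by
      simp only [betaOfA, if_neg (by omega : ¬ c+1+1 = 1)]
      norm_num
    rw [hβ]
    have hA1 : A (c+1) ≠ 0 := ne_of_gt (hA (c+1) (by omega) (by omega))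
    have hA2 : A (c+2) ≠ 0 := ne_of_gt (hA (c+2) (by omega) (by omega))
    have hfc : fA n A c = A (c+1) * (1 + A (c+1) * fA n A (c+1)) := fA_rec n A c (by omega)
    by_cases h2 : c + 1 + 1 < n
    · rw [if_pos h2, gA_top m n A (show b ≤ c + 1 by omega),
        gA_top m n A (show b ≤ c by omega),
        Finset.prod_Icc_succ_top (show b + 1 ≤ c + 1 by omega)]
      have hfc1 : fA n A (c+1) = A (c+2) * (1 + A (c+2) * fA n A (c+2)) :=
        fA_rec n A (c+1) (by omega)
      unfold gA
      rw [hfc, hfc1]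
      field_simp
      ring
    · rw [if_neg h2, gA_top m n A (show b ≤ c by omega)]
      have hfc1 : fA n A (c+1) = A (c+2) := by
        rw [show c + 1 = n - 1 by omega, fA_last n hn A, show n = c + 2 by omega]
      unfold gA
      rw [hfc, hfc1]
      field_simp
      ring

noncomputable def Gmat (m : ℝ) (n : ℕ) (A : ℕ → ℝ) : Matrix (Fin n) (Fin n) ℝ :=
  Matrix.of fun i j => gA m n A (min (i:ℕ) (j:ℕ)) (max (i:ℕ) (j:ℕ))

lemma HG (m : ℝ) (hm : 0 < m) (n : ℕ) (hn : 1 ≤ n) (A : ℕ → ℝ)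
    (hA : ∀ i : ℕ, 1 ≤ i → i ≤ n → 0 < A i) :
    Hpath n m (betaOfA m A) * Gmat m n A = 1 := by
  ext i j
  rw [Matrix.mul_apply, Matrix.one_apply]
  have hb : (j:ℕ) < n := j.isLt
  have key' := key m hm n hn A hA (i:ℕ) (j:ℕ) i.isLt hb
  have hsum : ∑ k : Fin n, Hpath n m (betaOfA m A) i k * Gmat m n A k j
      = ∑ k ∈ Finset.range n, (fun k =>
        (if (i:ℕ) = k then 2 * betaOfA m A ((i:ℕ)+1)
          else if (i:ℕ)+1 = k ∨ k+1 = (i:ℕ) then -m else 0)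
          * gA m n A (min k (j:ℕ)) (max k (j:ℕ))) k := by
    rw [← Fin.sum_univ_eq_sum_range]
    exact Finset.sum_congr rfl fun k _ => rfl
  rw [hsum]
  simp only []
  rcases Nat.eq_zero_or_pos (i:ℕ) with h0 | hpos
  · have hF0 : ∀ k ∈ Finset.range n,
        (if (i:ℕ) = k then 2 * betaOfA m A ((i:ℕ)+1)
          else if (i:ℕ)+1 = k ∨ k+1 = (i:ℕ) then -m else 0)
          * gA m n A (min k (j:ℕ)) (max k (j:ℕ))
        = (if k = 0 then 2 * betaOfA m A ((i:ℕ)+1) * gA m n A (min k (j:ℕ)) (max k (j:ℕ)) else 0)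
          + (if k = 1 then -m * gA m n A (min k (j:ℕ)) (max k (j:ℕ)) else 0) := by
      intro k _
      rw [h0]
      split_ifs <;> first | ring1 | (exfalso; first | exact ‹False› | omega | (simp_all only [or_false, false_or]; omega))
    rw [Finset.sum_congr rfl hF0, Finset.sum_add_distrib,
      Finset.sum_ite_eq' (Finset.range n) 0, Finset.sum_ite_eq' (Finset.range n) 1]
    rw [h0] at key'
    simp only [Finset.mem_range, if_pos (show 0 < n by omega)] at *
    rw [if_neg (by omega : ¬ 1 ≤ 0)] at key'
    simp only [Fin.ext_iff, h0]
    rw [show (0:ℕ) + 1 = 1 from rfl] at key'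
    linarith [key']
  · obtain ⟨c, hc⟩ : ∃ c, (i:ℕ) = c + 1 := ⟨(i:ℕ) - 1, by omega⟩
    have hF0 : ∀ k ∈ Finset.range n,
        (if (i:ℕ) = k then 2 * betaOfA m A ((i:ℕ)+1)
          else if (i:ℕ)+1 = k ∨ k+1 = (i:ℕ) then -m else 0)
          * gA m n A (min k (j:ℕ)) (max k (j:ℕ))
        = (if k = c then -m * gA m n A (min k (j:ℕ)) (max k (j:ℕ)) else 0)
          + (if k = c + 1 then 2 * betaOfA m A ((i:ℕ)+1) * gA m n A (min k (j:ℕ)) (max k (j:ℕ)) else 0)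
          + (if k = c + 2 then -m * gA m n A (min k (j:ℕ)) (max k (j:ℕ)) else 0) := by
      intro k _
      rw [hc]
      split_ifs <;> first | ring1 | (exfalso; first | exact ‹False› | omega | (simp_all only [or_false, false_or]; omega))
    rw [Finset.sum_congr rfl hF0, Finset.sum_add_distrib, Finset.sum_add_distrib,
      Finset.sum_ite_eq' (Finset.range n) c, Finset.sum_ite_eq' (Finset.range n) (c+1),
      Finset.sum_ite_eq' (Finset.range n) (c+2)]
    rw [hc] at key'
    rw [if_pos (by omega : 1 ≤ c + 1), Nat.add_sub_cancel] at key'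
    simp only [Finset.mem_range, if_pos (show c < n by omega),
      if_pos (show c + 1 < n by omega)]
    simp only [Fin.ext_iff, hc]
    rw [show c + 1 + 1 = c + 2 from rfl] at key'
    linarith [key']

noncomputable def Cmat (n : ℕ) (A : ℕ → ℝ) : Matrix (Fin n) (Fin n) ℝ :=
  Matrix.of fun i j => if (i:ℕ) = (j:ℕ) then (Real.sqrt (A ((i:ℕ)+1)))⁻¹
    else if (i:ℕ) + 1 = (j:ℕ) then -Real.sqrt (A ((i:ℕ)+1)) else 0

lemma keyC (m : ℝ) (n : ℕ) (A : ℕ → ℝ)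
    (hA : ∀ i : ℕ, 1 ≤ i → i ≤ n → 0 < A i) (a b : ℕ) (ha : a < n) (hb : b < n) :
    m * (∑ k ∈ Finset.range n,
      (if k = a then (Real.sqrt (A (k+1)))⁻¹ else if k + 1 = a then -Real.sqrt (A (k+1)) else 0)
      * (if k = b then (Real.sqrt (A (k+1)))⁻¹ else if k + 1 = b then -Real.sqrt (A (k+1)) else 0))
    = (if a = b then 2 * betaOfA m A (a+1)
        else if a + 1 = b ∨ b + 1 = a then -m else 0) := by
  by_cases hab : a = b
  · subst hab
    rw [if_pos rfl]
    rcases Nat.eq_zero_or_pos a with rfl | hpos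
    · have hcong : ∀ k ∈ Finset.range n,
          (if k = 0 then (Real.sqrt (A (k+1)))⁻¹ else if k + 1 = 0 then -Real.sqrt (A (k+1)) else 0)
          * (if k = 0 then (Real.sqrt (A (k+1)))⁻¹ else if k + 1 = 0 then -Real.sqrt (A (k+1)) else 0)
          = (if k = 0 then (Real.sqrt (A (k+1)))⁻¹ * (Real.sqrt (A (k+1)))⁻¹ else 0) := by
        intro k _
        split_ifs <;> first | ring1 | (exfalso; first | exact ‹False› | omega | (simp_all only [or_false, false_or]; omega))
      rw [Finset.sum_congr rfl hcong, Finset.sum_ite_eq' (Finset.range n) 0,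
        if_pos (Finset.mem_range.mpr (by omega))]
      have h1 : (0:ℝ) < A 1 := hA 1 le_rfl (by omega)
      rw [show betaOfA m A (0+1) = m / (2 * A 1) by simp [betaOfA],
        ← Real.mul_self_sqrt h1.le]
      have hs : Real.sqrt (A 1) ≠ 0 := by
        rw [Real.sqrt_ne_zero']; exact h1
      field_simp
      ring_nf
      rw [Real.sqrt_sq (Real.sqrt_nonneg _)]
    · obtain ⟨c, rfl⟩ : ∃ c, a = c + 1 := ⟨a - 1, by omega⟩
      have hcong : ∀ k ∈ Finset.range n,
          (if k = c+1 then (Real.sqrt (A (k+1)))⁻¹ else if k + 1 = c+1 then -Real.sqrt (A (k+1)) else 0)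
          * (if k = c+1 then (Real.sqrt (A (k+1)))⁻¹ else if k + 1 = c+1 then -Real.sqrt (A (k+1)) else 0)
          = (if k = c+1 then (Real.sqrt (A (k+1)))⁻¹ * (Real.sqrt (A (k+1)))⁻¹ else 0)
            + (if k = c then Real.sqrt (A (k+1)) * Real.sqrt (A (k+1)) else 0) := by
        intro k _
        split_ifs <;> first | ring1 | (exfalso; first | exact ‹False› | omega | (simp_all only [or_false, false_or]; omega))
      rw [Finset.sum_congr rfl hcong, Finset.sum_add_distrib,
        Finset.sum_ite_eq' (Finset.range n) (c+1), Finset.sum_ite_eq' (Finset.range n) c,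
        if_pos (Finset.mem_range.mpr (by omega)), if_pos (Finset.mem_range.mpr (by omega))]
      have h1 : (0:ℝ) < A (c+1) := hA (c+1) (by omega) (by omega)
      have h2 : (0:ℝ) < A (c+2) := hA (c+2) (by omega) (by omega)
      rw [Real.mul_self_sqrt h1.le,
        show betaOfA m A (c+1+1) = (m/2) * (A (c+1) + 1 / A (c+2)) by
          simp only [betaOfA, if_neg (by omega : ¬ c+1+1 = 1)]; norm_num,
        show (Real.sqrt (A (c+1+1)))⁻¹ * (Real.sqrt (A (c+1+1)))⁻¹
            = (A (c+2))⁻¹ by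
          rw [← mul_inv, Real.mul_self_sqrt h2.le]]
      field_simp
      ring
  · rw [if_neg hab]
    by_cases h1 : a + 1 = b
    · rw [if_pos (Or.inl h1)]
      have hcong : ∀ k ∈ Finset.range n,
          (if k = a then (Real.sqrt (A (k+1)))⁻¹ else if k + 1 = a then -Real.sqrt (A (k+1)) else 0)
          * (if k = b then (Real.sqrt (A (k+1)))⁻¹ else if k + 1 = b then -Real.sqrt (A (k+1)) else 0)
          = (if k = a then (Real.sqrt (A (k+1)))⁻¹ * -Real.sqrt (A (k+1)) else 0) := by
        intro k _
        split_ifs <;> first | ring1 | (exfalso; first | exact ‹False› | omega | (simp_all only [or_false, false_or]; omega))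
      rw [Finset.sum_congr rfl hcong, Finset.sum_ite_eq' (Finset.range n) a,
        if_pos (Finset.mem_range.mpr ha)]
      have hpa : (0:ℝ) < A (a+1) := hA (a+1) (by omega) (by omega)
      have hs : Real.sqrt (A (a+1)) ≠ 0 := by rw [Real.sqrt_ne_zero']; exact hpa
      field_simp
    · by_cases h2 : b + 1 = a
      · rw [if_pos (Or.inr h2)]
        have hcong : ∀ k ∈ Finset.range n,
            (if k = a then (Real.sqrt (A (k+1)))⁻¹ else if k + 1 = a then -Real.sqrt (A (k+1)) else 0)
            * (if k = b then (Real.sqrt (A (k+1)))⁻¹ else if k + 1 = b then -Real.sqrt (A (k+1)) else 0)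
            = (if k = b then -Real.sqrt (A (k+1)) * (Real.sqrt (A (k+1)))⁻¹ else 0) := by
          intro k _
          split_ifs <;> first | ring1 | (exfalso; first | exact ‹False› | omega | (simp_all only [or_false, false_or]; omega))
        rw [Finset.sum_congr rfl hcong, Finset.sum_ite_eq' (Finset.range n) b,
          if_pos (Finset.mem_range.mpr hb)]
        have hpb : (0:ℝ) < A (b+1) := hA (b+1) (by omega) (by omega)
        have hs : Real.sqrt (A (b+1)) ≠ 0 := by rw [Real.sqrt_ne_zero']; exact hpb
        field_simp
      · rw [if_neg (by omega : ¬ (a + 1 = b ∨ b + 1 = a))]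
        have hcong : ∀ k ∈ Finset.range n,
            (if k = a then (Real.sqrt (A (k+1)))⁻¹ else if k + 1 = a then -Real.sqrt (A (k+1)) else 0)
            * (if k = b then (Real.sqrt (A (k+1)))⁻¹ else if k + 1 = b then -Real.sqrt (A (k+1)) else 0)
            = 0 := by
          intro k _
          split_ifs <;> first | ring1 | (exfalso; first | exact ‹False› | omega | (simp_all only [or_false, false_or]; omega))
        rw [Finset.sum_congr rfl hcong, Finset.sum_const_zero, mul_zero]

lemma Hfact (m : ℝ) (n : ℕ) (A : ℕ → ℝ)
    (hA : ∀ i : ℕ, 1 ≤ i → i ≤ n → 0 < A i) :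
    Hpath n m (betaOfA m A) = m • ((Cmat n A)ᵀ * Cmat n A) := by
  ext i j
  rw [Matrix.smul_apply, Matrix.mul_apply]
  have hsum : ∑ k : Fin n, (Cmat n A)ᵀ i k * Cmat n A k j
      = ∑ k ∈ Finset.range n, (fun k =>
        (if k = (i:ℕ) then (Real.sqrt (A (k+1)))⁻¹ else if k + 1 = (i:ℕ) then -Real.sqrt (A (k+1)) else 0)
        * (if k = (j:ℕ) then (Real.sqrt (A (k+1)))⁻¹ else if k + 1 = (j:ℕ) then -Real.sqrt (A (k+1)) else 0)) k := by
    rw [← Fin.sum_univ_eq_sum_range]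
    exact Finset.sum_congr rfl fun k _ => rfl
  rw [hsum, smul_eq_mul, keyC m n A hA (i:ℕ) (j:ℕ) i.isLt j.isLt]
  rfl

lemma posdef (m : ℝ) (hm : 0 < m) (n : ℕ) (hn : 1 ≤ n) (A : ℕ → ℝ)
    (hA : ∀ i : ℕ, 1 ≤ i → i ≤ n → 0 < A i) :
    (Hpath n m (betaOfA m A)).PosDef := by
  have hfact := Hfact m n A hA
  refine Matrix.PosDef.of_dotProduct_mulVec_pos ?_ ?_
  · show (Hpath n m (betaOfA m A))ᴴ = _
    ext i j
    simp only [Matrix.conjTranspose_apply, Hpath, Matrix.of_apply, star_trivial]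
    split_ifs <;> first | ring1 | (congr 2; omega) | (exfalso; first | exact ‹False› | omega | (simp_all only [or_false, false_or]; omega))
  · intro x hx
    have hdet : (Cmat n A).det ≠ 0 := by
      rw [Matrix.det_of_upperTriangular]
      · rw [Finset.prod_ne_zero_iff]
        intro i _
        have : Cmat n A i i = (Real.sqrt (A ((i:ℕ)+1)))⁻¹ := by
          simp [Cmat]
        rw [this]
        refine inv_ne_zero ?_
        rw [Real.sqrt_ne_zero']
        exact hA ((i:ℕ)+1) (by omega) i.isLt
      · intro i j hij
        have hij' : (j:ℕ) < (i:ℕ) := hij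
        simp only [Cmat, Matrix.of_apply]
        rw [if_neg (by omega), if_neg (by omega)]
    have hCx : Cmat n A *ᵥ x ≠ 0 := by
      intro h
      have hinj : Function.Injective ((Cmat n A).mulVec) :=
        Matrix.mulVec_injective_iff_isUnit.mpr
          ((Matrix.isUnit_iff_isUnit_det _).mpr (isUnit_iff_ne_zero.mpr hdet))
      exact hx (hinj (by simp [h]))
    rw [hfact, Matrix.smul_mulVec, dotProduct_smul, smul_eq_mul,
      star_trivial, ← Matrix.mulVec_mulVec, Matrix.dotProduct_mulVec,
      Matrix.vecMul_transpose]
    refine mul_pos hm ?_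
    have := Matrix.dotProduct_star_self_pos_iff (v := Cmat n A *ᵥ x) |>.mpr hCx
    simpa [star_trivial] using this

end HpathAux


/-- Explicit inverse of the discrete Schrödinger operator on the path graph: `H` is
positive definite and, for `1 ≤ j ≤ i ≤ n` (here written 0-based),
`G(j,i) = G(i,j) = (∏_{k=j}^{i-1} A_k)·(1/m)·(A_i + Σ_{k=i}^{n-1}(∏_{r=i}^k A_r²)A_{k+1})`. -/
theorem Hpath_inv_explicit (m : ℝ) (hm : 0 < m) (n : ℕ) (hn : 1 ≤ n) (A : ℕ → ℝ)
    (hA : ∀ i : ℕ, 1 ≤ i → i ≤ n → 0 < A i) :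
    (Hpath n m (betaOfA m A)).PosDef ∧
    ∀ i j : Fin n, (j : ℕ) ≤ (i : ℕ) →
      (Hpath n m (betaOfA m A))⁻¹ j i =
        (∏ k ∈ Finset.Icc ((j : ℕ) + 1) (i : ℕ), A k) * (1 / m) *
          (A ((i : ℕ) + 1) +
            ∑ k ∈ Finset.Icc ((i : ℕ) + 1) (n - 1),
              (∏ r ∈ Finset.Icc ((i : ℕ) + 1) k, A r ^ 2) * A (k + 1)) ∧
      (Hpath n m (betaOfA m A))⁻¹ i j =
        (∏ k ∈ Finset.Icc ((j : ℕ) + 1) (i : ℕ), A k) * (1 / m) *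
          (A ((i : ℕ) + 1) +
            ∑ k ∈ Finset.Icc ((i : ℕ) + 1) (n - 1),
              (∏ r ∈ Finset.Icc ((i : ℕ) + 1) k, A r ^ 2) * A (k + 1)) := by
  have hG : Hpath n m (betaOfA m A) * HpathAux.Gmat m n A = 1 :=
    HpathAux.HG m hm n hn A hA
  have hinv : (Hpath n m (betaOfA m A))⁻¹ = HpathAux.Gmat m n A :=
    Matrix.inv_eq_right_inv hG
  refine ⟨HpathAux.posdef m hm n hn A hA, fun i j hji => ?_⟩
  constructor
  · rw [hinv]
    show HpathAux.gA m n A (min ((j:ℕ)) ((i:ℕ))) (max ((j:ℕ)) ((i:ℕ))) = _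
    rw [min_eq_left hji, max_eq_right hji]
    rfl
  · rw [hinv]
    show HpathAux.gA m n A (min ((i:ℕ)) ((j:ℕ))) (max ((i:ℕ)) ((j:ℕ))) = _
    rw [min_eq_right hji, max_eq_left hji]
    rfl
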